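/- (Backtracking accepts unit step size.) Let m ≥ 1, let b ∈ ℝ^m have nonnegative entries, let u ∈ ℂ^m, and let ũ be the phase-matched synthesis of u with magnitudes b. Then f(ũ) = 0, and for every β with 0 < β ≤ 1/2, the Armijo backtracking criterion with step size λ = 1 and descent direction g = u − ũ is satisfied: f(u − g) ≤ f(u) − β ‖g‖², where ‖g‖² = Σ_{l=0}^{m−1} |u_l − ũ_l|². -/

import Mathlib

/-- The `m`-point discrete Fourier transform of `w` (entries indexed `0, …, m-1`):
`(F w)_i = ∑_{l=0}^{m-1} w_l · exp(-2πι i l / m)`. -/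
noncomputable def dft (m : ℕ) (w : ℕ → ℂ) (i : ℕ) : ℂ :=
  ∑ l ∈ Finset.range m,
    w l * Complex.exp (-((2 : ℂ) * (Real.pi : ℂ) * Complex.I * (i : ℂ) * (l : ℂ)) / (m : ℂ))

/-- The phase function: `sgn(w) = w / |w|` for `w ≠ 0` and `sgn(0) = 1`. -/
noncomputable def csgn (w : ℂ) : ℂ :=
  if w = 0 then 1 else w / (‖w‖ : ℂ)

/-- The phase-matched synthesis of `u ∈ ℂ^m` with target magnitudes `b`:
`ũ_l = (1/m) ∑_{i=0}^{m-1} exp(2πι i l / m) · b_i · sgn((F u)_i)`. -/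
noncomputable def utilde (m : ℕ) (b : ℕ → ℝ) (u : ℕ → ℂ) (l : ℕ) : ℂ :=
  ((m : ℂ))⁻¹ * ∑ i ∈ Finset.range m,
    Complex.exp ((2 : ℂ) * (Real.pi : ℂ) * Complex.I * (i : ℂ) * (l : ℂ) / (m : ℂ)) *
      (b i : ℂ) * csgn (dft m u i)

/-- The amplitude loss `f(u) = (1/(2m)) ∑_{i<m} (|(F u)_i| - b_i)²`. -/
noncomputable def floss (m : ℕ) (b : ℕ → ℝ) (u : ℕ → ℂ) : ℝ :=
  (1 / (2 * m) : ℝ) * ∑ i ∈ Finset.range m, (‖dft m u i‖ - b i) ^ 2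

/-!
Up to the factor `m`, the DFT is unitary. The synthesis `ũ` is the inverse DFT of
`b_i · sgn((F u)_i)`, so `|(F ũ)_i| = b_i` and `f(ũ) = 0`. By Parseval,
`‖u - ũ‖² = (1/m) ∑ |(F u)_i - b_i sgn((F u)_i)|² = (1/m) ∑ (|(F u)_i| - b_i)² = 2 f(u)`,
so the Armijo inequality with unit step reads `0 ≤ (1 - 2β) f(u)`.
-/

open Finset Complex
open scoped Real ComplexConjugate

theorem sum_range_exp_two_pi_I_mul_div (m : ℕ) (k : ℤ) :
    ∑ l ∈ range m, exp (2 * π * I * k * l / m) = if (m : ℤ) ∣ k then (m : ℂ) else 0 := by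
  rcases Nat.eq_zero_or_pos m with rfl | hm
  · simp
  have hm0 : (m : ℂ) ≠ 0 := by exact_mod_cast hm.ne'
  set ζ := exp (2 * π * I * k / m)
  have hpow : ∀ l : ℕ, exp (2 * π * I * k * l / m) = ζ ^ l := fun l => by
    rw [← exp_nat_mul]; ring_nf
  simp only [hpow]
  split_ifs with hdvd
  · obtain ⟨c, rfl⟩ := hdvd
    have hζ : ζ = 1 := by
      rw [← exp_int_mul_two_pi_mul_I c]; simp only [ζ]; push_cast; congr 1; field_simp
    simp [hζ]
  · have hζ : ζ ≠ 1 := by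
      rw [Ne, exp_eq_one_iff]
      rintro ⟨n, hn⟩
      exact hdvd ⟨n, by field_simp at hn; exact_mod_cast hn⟩
    have hζm : ζ ^ m = 1 := by
      rw [← exp_nat_mul, ← exp_int_mul_two_pi_mul_I k]; field_simp
    rw [geom_sum_eq hζ, hζm, sub_self, zero_div]

theorem sum_range_exp_mul_exp_neg {m i j : ℕ} (hi : i < m) (hj : j < m) :
    ∑ l ∈ range m, exp (2 * π * I * j * l / m) * exp (-(2 * π * I * i * l) / m) =
      if i = j then (m : ℂ) else 0 := by
  have hexp : ∀ l : ℕ, exp (2 * π * I * j * l / m) * exp (-(2 * π * I * i * l) / m) =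
      exp (2 * π * I * ((j - i : ℤ) : ℂ) * l / m) := fun l => by
    rw [← exp_add]; push_cast; ring_nf
  simp only [hexp, sum_range_exp_two_pi_I_mul_div, ← Nat.modEq_iff_dvd]
  exact if_congr ⟨fun h => h.eq_of_lt_of_lt hi hj, fun h => h ▸ rfl⟩ rfl rfl

noncomputable def idft (m : ℕ) (v : ℕ → ℂ) (l : ℕ) : ℂ :=
  (m : ℂ)⁻¹ * ∑ i ∈ range m, exp (2 * π * I * i * l / m) * v i

theorem utilde_eq_idft (m : ℕ) (b : ℕ → ℝ) (u : ℕ → ℂ) :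
    utilde m b u = idft m (fun i => b i * csgn (dft m u i)) := by
  ext l
  simp only [utilde, idft, mul_assoc]

theorem dft_idft {m i : ℕ} (hi : i < m) (v : ℕ → ℂ) : dft m (idft m v) i = v i := by
  have hm : (m : ℂ) ≠ 0 := by exact_mod_cast (i.zero_le.trans_lt hi).ne'
  calc dft m (idft m v) i
      = (m : ℂ)⁻¹ * ∑ j ∈ range m, v j *
          ∑ l ∈ range m, exp (2 * π * I * j * l / m) * exp (-(2 * π * I * i * l) / m) := by
        simp only [dft, idft, mul_sum, sum_mul]
        rw [sum_comm]
        exact sum_congr rfl fun j _ => sum_congr rfl fun l _ => by ring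
    _ = v i := by
        rw [sum_congr rfl fun j hj => by rw [sum_range_exp_mul_exp_neg hi (mem_range.mp hj)]]
        simp only [mul_ite, mul_zero, sum_ite_eq, mem_range, if_pos hi]
        field_simp

theorem idft_dft {m l : ℕ} (hl : l < m) (w : ℕ → ℂ) : idft m (dft m w) l = w l := by
  have hm : (m : ℂ) ≠ 0 := by exact_mod_cast (l.zero_le.trans_lt hl).ne'
  calc idft m (dft m w) l
      = (m : ℂ)⁻¹ * ∑ k ∈ range m, w k *
          ∑ i ∈ range m, exp (2 * π * I * l * i / m) * exp (-(2 * π * I * k * i) / m) := by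
        simp only [dft, idft, mul_sum]
        rw [sum_comm]
        refine sum_congr rfl fun k _ => sum_congr rfl fun i _ => ?_
        rw [mul_right_comm (2 * π * I : ℂ) (i : ℂ) (l : ℂ),
          mul_right_comm (2 * π * I : ℂ) (i : ℂ) (k : ℂ)]
        ring
    _ = w l := by
        rw [sum_congr rfl fun k hk => by rw [sum_range_exp_mul_exp_neg (mem_range.mp hk) hl]]
        simp only [mul_ite, mul_zero, sum_ite_eq', mem_range, if_pos hl]
        field_simp

theorem sum_dft_mul_conj (m : ℕ) (w v : ℕ → ℂ) :
    ∑ i ∈ range m, dft m w i * conj (v i) =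
      ∑ l ∈ range m, w l * conj (∑ i ∈ range m, exp (2 * π * I * i * l / m) * v i) := by
  have hconj : ∀ i l : ℕ, conj (exp (2 * π * I * i * l / m)) = exp (-(2 * π * I * i * l) / m) :=
    fun i l => by rw [← exp_conj]; simp [neg_div, map_ofNat]
  simp only [dft, map_sum, map_mul, hconj, sum_mul, mul_sum]
  rw [sum_comm]
  exact sum_congr rfl fun l _ => sum_congr rfl fun i _ => by ring

theorem sum_sq_norm_dft (m : ℕ) (w : ℕ → ℂ) :
    ∑ i ∈ range m, ‖dft m w i‖ ^ 2 = m * ∑ l ∈ range m, ‖w l‖ ^ 2 := by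
  suffices h : ∑ i ∈ range m, (‖dft m w i‖ : ℂ) ^ 2 = m * ∑ l ∈ range m, (‖w l‖ : ℂ) ^ 2 by
    exact_mod_cast h
  simp only [← mul_conj', sum_dft_mul_conj, mul_sum]
  refine sum_congr rfl fun l hl => ?_
  have hm : (m : ℂ) ≠ 0 := by exact_mod_cast (l.zero_le.trans_lt (mem_range.mp hl)).ne'
  rw [← mul_inv_cancel_left₀ hm (∑ i ∈ range m, _), ← idft, idft_dft (mem_range.mp hl), map_mul,
    conj_natCast]
  ring

theorem dft_sub (m : ℕ) (w w' : ℕ → ℂ) (i : ℕ) :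
    dft m (fun l => w l - w' l) i = dft m w i - dft m w' i := by
  simp only [dft, sub_mul, sum_sub_distrib]

theorem norm_csgn (z : ℂ) : ‖csgn z‖ = 1 := by
  rcases eq_or_ne z 0 with rfl | hz
  · simp [csgn]
  · simp [csgn, hz]

theorem norm_sub_mul_csgn (z : ℂ) (c : ℝ) : ‖z - c * csgn z‖ = |‖z‖ - c| := by
  rcases eq_or_ne z 0 with rfl | hz
  · simp [csgn]
  · have hz' : (‖z‖ : ℂ) ≠ 0 := by exact_mod_cast norm_ne_zero_iff.mpr hz
    have : z - c * csgn z = ((‖z‖ - c : ℝ) / ‖z‖ : ℂ) * z := by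
      rw [csgn, if_neg hz]; push_cast; field_simp
    rw [this, norm_mul, norm_div, norm_real, norm_real, Real.norm_eq_abs, norm_norm,
      div_mul_cancel₀ _ (norm_ne_zero_iff.mpr hz)]

theorem floss_nonneg (m : ℕ) (b : ℕ → ℝ) (u : ℕ → ℂ) : 0 ≤ floss m b u :=
  mul_nonneg (by positivity) (sum_nonneg fun i _ => sq_nonneg _)

theorem floss_utilde (m : ℕ) (b : ℕ → ℝ) (hb : ∀ i, 0 ≤ b i) (u : ℕ → ℂ) :
    floss m b (utilde m b u) = 0 := by
  rw [floss, sum_eq_zero, mul_zero]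
  intro i hi
  rw [utilde_eq_idft, dft_idft (mem_range.mp hi), norm_mul, norm_csgn, norm_real,
    Real.norm_of_nonneg (hb i), mul_one, sub_self, sq, mul_zero]

theorem sum_sq_norm_sub_utilde (m : ℕ) (b : ℕ → ℝ) (u : ℕ → ℂ) :
    ∑ l ∈ range m, ‖u l - utilde m b u l‖ ^ 2 = 2 * floss m b u := by
  rcases Nat.eq_zero_or_pos m with rfl | hm
  · simp [floss]
  have hdft : ∀ i ∈ range m,
      ‖dft m (fun l => u l - utilde m b u l) i‖ ^ 2 = (‖dft m u i‖ - b i) ^ 2 := fun i hi => by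
    rw [dft_sub, utilde_eq_idft, dft_idft (mem_range.mp hi), norm_sub_mul_csgn, sq_abs]
  have hparseval := sum_sq_norm_dft m (fun l => u l - utilde m b u l)
  rw [sum_congr rfl hdft] at hparseval
  rw [floss, hparseval]
  field_simp

theorem stmt12_general (m : ℕ) (b : ℕ → ℝ) (hb : ∀ i, 0 ≤ b i) (u : ℕ → ℂ)
    (β : ℝ) (hβ : β ≤ 1 / 2) :
    floss m b (utilde m b u) = 0 ∧
      floss m b (fun l => u l - (u l - utilde m b u l)) ≤
        floss m b u - β * ∑ l ∈ Finset.range m, ‖u l - utilde m b u l‖ ^ 2 := by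
  have hzero := floss_utilde m b hb u
  refine ⟨hzero, ?_⟩
  simp only [sub_sub_cancel]
  rw [hzero, sum_sq_norm_sub_utilde]
  have := mul_le_mul_of_nonneg_right hβ (floss_nonneg m b u)
  linarith

/-- Backtracking accepts the unit step size: `f(ũ) = 0`, and for every `0 < β ≤ 1/2` the
Armijo criterion with step size `λ = 1` and descent direction `g = u - ũ` holds:
`f(u - g) ≤ f(u) - β ‖g‖²`. -/
theorem stmt12 (m : ℕ) (hm : 1 ≤ m) (b : ℕ → ℝ) (hb : ∀ i, 0 ≤ b i) (u : ℕ → ℂ)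
    (β : ℝ) (hβ0 : 0 < β) (hβ : β ≤ 1 / 2) :
    floss m b (utilde m b u) = 0 ∧
      floss m b (fun l => u l - (u l - utilde m b u l)) ≤
        floss m b u - β * ∑ l ∈ Finset.range m, ‖u l - utilde m b u l‖ ^ 2 :=
  stmt12_general m b hb u β hβ
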